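/- For any finite block B of positive integers, μ(C_B) = μ(C_{B*}), where B* is the reversal of B. -/

import Mathlib

open MeasureTheory

/-- The Gauss map `x ↦ {1/x}` on `[0,1)`. -/
noncomputable def gaussMap (x : ℝ) : ℝ := if x = 0 then 0 else Int.fract x⁻¹

/-- The cylinder `C_B`. -/
noncomputable def cfCyl (B : List ℕ+) : Set ℝ :=
  {x | x ∈ Set.Ico (0 : ℝ) 1 ∧
    ∀ i, (h : i < B.length) → ⌊(gaussMap^[i] x)⁻¹⌋ = ((B.get ⟨i, h⟩ : ℕ) : ℤ)}

/-- The Gauss measure `μ(A) = (1/log 2)·∫_A dx/(1+x)` on `[0,1)`. -/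
noncomputable def gaussMeasure : Measure ℝ :=
  (volume.restrict (Set.Ico (0 : ℝ) 1)).withDensity
    fun x => ENNReal.ofReal (1 / ((1 + x) * Real.log 2))

/-! The cylinder `C_B` is, up to its two endpoints, the image of `[0,1]` under the inverse branch
`t ↦ 1/(a₁ + 1/(a₂ + ⋯ + 1/(aₙ + t)))`, a monotone Möbius map whose matrix is
`M = ∏ [[0,1],[1,aᵢ]]`. Integrating the Gauss density between its endpoints `M₀₁/M₁₁` and
`(M₀₀+M₀₁)/(M₁₀+M₁₁)` gives
`μ(C_B) = |log ((M₀₀+M₀₁+M₁₀+M₁₁) M₁₁ / ((M₁₀+M₁₁)(M₀₁+M₁₁)))| / log 2`,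
which is symmetric under `M₀₁ ↔ M₁₀`. Reversing `B` transposes `M`, as every factor is symmetric. -/

open Set Real
open scoped Matrix

noncomputable def invBranch : List ℕ+ → ℝ → ℝ
  | [], t => t
  | a :: B, t => ((a : ℝ) + invBranch B t)⁻¹

lemma invBranch_cons (a : ℕ+) (B : List ℕ+) :
    invBranch (a :: B) = (fun y => ((a : ℝ) + y)⁻¹) ∘ invBranch B := rfl

lemma gaussMap_mem_Ico (x : ℝ) : gaussMap x ∈ Ico (0 : ℝ) 1 := by
  unfold gaussMap
  split_ifs
  · simp
  · exact ⟨Int.fract_nonneg _, Int.fract_lt_one _⟩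

lemma cfCyl_nil : cfCyl [] = Ico 0 1 := by
  ext x; simp [cfCyl]

lemma mem_cfCyl_cons {a : ℕ+} {B : List ℕ+} {x : ℝ} :
    x ∈ cfCyl (a :: B) ↔ x ∈ Ico 0 1 ∧ ⌊x⁻¹⌋ = ((a : ℕ) : ℤ) ∧ gaussMap x ∈ cfCyl B := by
  refine ⟨fun ⟨hx, hB⟩ => ⟨hx, hB 0 (Nat.succ_pos _), gaussMap_mem_Ico x,
    fun i hi => hB (i + 1) (Nat.succ_lt_succ hi)⟩, ?_⟩
  rintro ⟨hx, h0, -, hB⟩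
  refine ⟨hx, fun i hi => ?_⟩
  cases i with
  | zero => exact h0
  | succ i => exact hB i (Nat.lt_of_succ_lt_succ hi)

lemma cfCyl_cons (a : ℕ+) (B : List ℕ+) :
    cfCyl (a :: B) = Ico 0 1 ∩ (fun y => ((a : ℝ) + y)⁻¹) '' cfCyl B := by
  ext x
  rw [mem_cfCyl_cons]
  constructor
  · rintro ⟨hx, hfloor, hB⟩
    refine ⟨hx, gaussMap x, hB, ?_⟩
    have hx0 : x ≠ 0 := by
      rintro rfl
      rw [inv_zero, Int.floor_zero] at hfloor
      have := a.pos
      omega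
    simp only [gaussMap, if_neg hx0]
    rw [show ((a : ℕ) : ℝ) = (⌊x⁻¹⌋ : ℝ) by exact_mod_cast hfloor.symm, Int.floor_add_fract,
      inv_inv]
  · rintro ⟨hx, y, hyB, rfl⟩
    have hy : y ∈ Ico (0 : ℝ) 1 := hyB.1
    have hfloor : ⌊(a : ℝ) + y⌋ = ((a : ℕ) : ℤ) := by
      rw [Int.floor_natCast_add, Int.floor_eq_zero_iff.mpr hy, add_zero]
    have hne : ((a : ℝ) + y)⁻¹ ≠ 0 := inv_ne_zero (by have := hy.1; positivity)
    refine ⟨hx, by rwa [inv_inv], ?_⟩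
    dsimp only
    rwa [gaussMap, if_neg hne, inv_inv, Int.fract_natCast_add, Int.fract_eq_self.mpr hy]

lemma invBranch_mapsTo_Icc (B : List ℕ+) : MapsTo (invBranch B) (Icc 0 1) (Icc 0 1) := by
  induction B with
  | nil => exact mapsTo_id _
  | cons a B ih =>
    intro t ht
    obtain ⟨hy0, -⟩ := ih ht
    have ha : (1 : ℝ) ≤ (a : ℕ) := Nat.one_le_cast.mpr a.pos
    exact ⟨(inv_pos.mpr (by positivity)).le, inv_le_one_of_one_le₀ (by linarith)⟩

lemma invBranch_mapsTo_Ioo (B : List ℕ+) : MapsTo (invBranch B) (Ioo 0 1) (Ioo 0 1) := by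
  induction B with
  | nil => exact mapsTo_id _
  | cons a B ih =>
    intro t ht
    obtain ⟨hy0, -⟩ := ih ht
    have ha : (1 : ℝ) ≤ (a : ℕ) := Nat.one_le_cast.mpr a.pos
    exact ⟨inv_pos.mpr (by positivity), inv_lt_one_of_one_lt₀ (by linarith)⟩

lemma continuousOn_invBranch (B : List ℕ+) : ContinuousOn (invBranch B) (Icc 0 1) := by
  induction B with
  | nil => exact continuousOn_id
  | cons a B ih =>
    refine (continuousOn_const.add ih).inv₀ fun t ht => ?_
    have : 0 ≤ invBranch B t := (invBranch_mapsTo_Icc B ht).1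
    show (a : ℝ) + invBranch B t ≠ 0
    positivity

lemma monotoneOn_or_antitoneOn_invBranch (B : List ℕ+) :
    MonotoneOn (invBranch B) (Icc 0 1) ∨ AntitoneOn (invBranch B) (Icc 0 1) := by
  induction B with
  | nil => exact Or.inl monotoneOn_id
  | cons a B ih =>
    have hstep : AntitoneOn (fun y : ℝ => ((a : ℝ) + y)⁻¹) (Icc 0 1) := fun x hx y _ hxy =>
      inv_anti₀ (by have := hx.1; positivity) (by linarith)
    rw [invBranch_cons]
    exact ih.symm.imp (hstep.comp · (invBranch_mapsTo_Icc B))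
      (hstep.comp_MonotoneOn · (invBranch_mapsTo_Icc B))

lemma image_invBranch_Icc (B : List ℕ+) :
    invBranch B '' Icc 0 1 = uIcc (invBranch B 0) (invBranch B 1) := by
  have hI : uIcc (0 : ℝ) 1 = Icc 0 1 := uIcc_of_le zero_le_one
  have hc := continuousOn_invBranch B
  rw [← hI] at hc ⊢
  rcases monotoneOn_or_antitoneOn_invBranch B with h | h <;> rw [← hI] at h
  · exact hc.image_uIcc_of_monotoneOn h
  · exact hc.image_uIcc_of_antitoneOn h

lemma cfCyl_subset_image_invBranch (B : List ℕ+) : cfCyl B ⊆ invBranch B '' Icc 0 1 := by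
  induction B with
  | nil => simpa [cfCyl_nil, invBranch] using Ico_subset_Icc_self
  | cons a B ih =>
    rw [cfCyl_cons, invBranch_cons, image_comp]
    exact inter_subset_right.trans (image_mono ih)

lemma image_invBranch_Ioo_subset_cfCyl (B : List ℕ+) : invBranch B '' Ioo 0 1 ⊆ cfCyl B := by
  induction B with
  | nil => simpa [cfCyl_nil, invBranch] using Ioo_subset_Ico_self
  | cons a B ih =>
    rw [cfCyl_cons, invBranch_cons, image_comp]
    refine subset_inter ?_ (image_mono ih)
    rw [← image_comp, ← invBranch_cons]
    exact ((invBranch_mapsTo_Ioo _).image_subset).trans Ioo_subset_Ico_self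

instance nullSingletonClass_gaussMeasure : NullSingletonClass gaussMeasure := by
  unfold gaussMeasure
  infer_instance

lemma gaussMeasure_Ioo {u v : ℝ} (hu : 0 ≤ u) (huv : u ≤ v) (hv : v ≤ 1) :
    gaussMeasure (Ioo u v) = ENNReal.ofReal (log ((1 + v) / (1 + u)) / log 2) := by
  have hsub : Ioo u v ⊆ Ico 0 1 := fun x hx => ⟨hu.trans hx.1.le, hx.2.trans_le hv⟩
  have hlog2 : 0 < log 2 := log_pos one_lt_two
  have hcont : ContinuousOn (fun x : ℝ => 1 / ((1 + x) * log 2)) (Icc u v) :=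
    continuousOn_const.div (by fun_prop) fun x hx => by
      have := hu.trans hx.1
      positivity
  have hnonneg : 0 ≤ᵐ[volume.restrict (Ioo u v)] fun x : ℝ => 1 / ((1 + x) * log 2) := by
    filter_upwards [ae_restrict_mem measurableSet_Ioo] with x hx
    have := hu.trans hx.1.le
    positivity
  rw [gaussMeasure, withDensity_apply _ measurableSet_Ioo,
    Measure.restrict_restrict measurableSet_Ioo, inter_eq_left.mpr hsub,
    ← ofReal_integral_eq_lintegral_ofReal
      (hcont.integrableOn_Icc.mono_set Ioo_subset_Icc_self) hnonneg,
    ← integral_Ioc_eq_integral_Ioo, ← intervalIntegral.integral_of_le huv]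
  simp_rw [one_div, mul_inv]
  rw [intervalIntegral.integral_mul_const, intervalIntegral.integral_comp_add_left (·⁻¹),
    integral_inv_of_pos (by linarith) (by linarith), div_eq_mul_inv _ (log 2)]

lemma gaussMeasure_uIcc {u v : ℝ} (hu : u ∈ Icc (0 : ℝ) 1) (hv : v ∈ Icc (0 : ℝ) 1) :
    gaussMeasure (uIcc u v) = ENNReal.ofReal (|log ((1 + v) / (1 + u))| / log 2) := by
  wlog huv : u ≤ v generalizing u v
  · rw [uIcc_comm, this hv hu (le_of_not_ge huv), ← inv_div (1 + u), log_inv, abs_neg]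
  have hlog : 0 ≤ log ((1 + v) / (1 + u)) :=
    log_nonneg ((one_le_div (by linarith [hu.1])).mpr (by linarith))
  rw [uIcc_of_le huv, ← measure_congr Ioo_ae_eq_Icc, gaussMeasure_Ioo hu.1 huv hv.2,
    abs_of_nonneg hlog]

lemma gaussMeasure_cfCyl (B : List ℕ+) :
    gaussMeasure (cfCyl B) = ENNReal.ofReal
      (|log ((1 + invBranch B 1) / (1 + invBranch B 0))| / log 2) := by
  have hIcc : Icc (0 : ℝ) 1 = insert 0 (insert 1 (Ioo 0 1)) := by
    rw [Ioo_insert_right zero_lt_one, Ioc_insert_left zero_le_one]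
  have hends : gaussMeasure (invBranch B '' Icc 0 1) = gaussMeasure (invBranch B '' Ioo 0 1) := by
    rw [hIcc, image_insert_eq, image_insert_eq, measure_congr (insert_ae_eq_self _ _),
      measure_congr (insert_ae_eq_self _ _)]
  have hcyl : gaussMeasure (cfCyl B) = gaussMeasure (invBranch B '' Icc 0 1) :=
    le_antisymm (measure_mono (cfCyl_subset_image_invBranch B))
      (hends ▸ measure_mono (image_invBranch_Ioo_subset_cfCyl B))
  rw [hcyl, image_invBranch_Icc,
    gaussMeasure_uIcc (invBranch_mapsTo_Icc B (left_mem_Icc.mpr zero_le_one))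
      (invBranch_mapsTo_Icc B (right_mem_Icc.mpr zero_le_one))]

def cfMatrix (B : List ℕ+) : Matrix (Fin 2) (Fin 2) ℕ :=
  (B.map fun a : ℕ+ => !![0, 1; 1, (a : ℕ)]).prod

lemma cfMatrix_cons (a : ℕ+) (B : List ℕ+) :
    cfMatrix (a :: B) = !![0, 1; 1, (a : ℕ)] * cfMatrix B := by
  rw [cfMatrix, List.map_cons, List.prod_cons, cfMatrix]

lemma cfMatrix_reverse (B : List ℕ+) : cfMatrix B.reverse = (cfMatrix B)ᵀ := by
  rw [cfMatrix, cfMatrix, Matrix.transpose_list_prod, List.map_reverse, List.map_map]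
  congr 3
  funext a
  ext i j
  fin_cases i <;> fin_cases j <;> rfl

lemma one_le_cfMatrix_one_one (B : List ℕ+) : 1 ≤ cfMatrix B 1 1 := by
  induction B with
  | nil => simp [cfMatrix]
  | cons a B ih =>
    simp only [cfMatrix_cons, Matrix.mul_apply, Matrix.of_apply, Matrix.cons_val',
      Matrix.cons_val_fin_one, Matrix.cons_val_one, Fin.sum_univ_two, Matrix.cons_val_zero, one_mul]
    nlinarith [a.pos]

lemma invBranch_eq_div (B : List ℕ+) {t : ℝ} (ht : 0 ≤ t) :
    invBranch B t = ((cfMatrix B 0 0 : ℝ) * t + cfMatrix B 0 1) /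
      ((cfMatrix B 1 0 : ℝ) * t + cfMatrix B 1 1) := by
  induction B with
  | nil => simp [cfMatrix, invBranch]
  | cons a B ih =>
    have h11 : (1 : ℝ) ≤ cfMatrix B 1 1 := by exact_mod_cast one_le_cfMatrix_one_one B
    have hden : 0 < (a : ℝ) * ((cfMatrix B 1 0 : ℝ) * t + cfMatrix B 1 1) +
        ((cfMatrix B 0 0 : ℝ) * t + cfMatrix B 0 1) := by positivity
    simp only [invBranch, ih, cfMatrix_cons, Matrix.mul_apply, Matrix.of_apply, Matrix.cons_val',
      Matrix.cons_val_fin_one, Matrix.cons_val_zero, Fin.sum_univ_two, zero_mul,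
      Matrix.cons_val_one, one_mul, zero_add, Nat.cast_add, Nat.cast_mul]
    field_simp
    ring

lemma one_add_invBranch_one_div_one_add_invBranch_zero (B : List ℕ+) :
    (1 + invBranch B 1) / (1 + invBranch B 0) =
      ((cfMatrix B 0 0 + cfMatrix B 0 1 + cfMatrix B 1 0 + cfMatrix B 1 1) * cfMatrix B 1 1 : ℝ) /
        ((cfMatrix B 1 0 + cfMatrix B 1 1) * (cfMatrix B 0 1 + cfMatrix B 1 1)) := by
  have h11 : (1 : ℝ) ≤ cfMatrix B 1 1 := by exact_mod_cast one_le_cfMatrix_one_one B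
  rw [invBranch_eq_div B zero_le_one, invBranch_eq_div B le_rfl]
  field_simp
  ring

/-- For any finite block `B`: `μ(C_B) = μ(C_{B*})` where `B*` is the reversal. -/
theorem gauss_measure_cylinder_reversal (B : List ℕ+) :
    gaussMeasure (cfCyl B) = gaussMeasure (cfCyl B.reverse) := by
  rw [gaussMeasure_cfCyl, gaussMeasure_cfCyl, one_add_invBranch_one_div_one_add_invBranch_zero,
    one_add_invBranch_one_div_one_add_invBranch_zero, cfMatrix_reverse]
  simp only [Matrix.transpose_apply]
  ring_nf
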